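/- Let F(μ) = |μ|(Ω) + ι_{M⁺(Ω)}(μ). For a nonnegative measure μ ∈ M⁺(Ω), a continuous function ψ ∈ C(Ω, ℝ) belongs to the subdifferential ∂F(μ) if and only if ψ(x) ≤ 1 for all x ∈ Ω and ψ(x) = 1 for all x in the support of μ. For μ ∉ M⁺(Ω), ∂F(μ) = ∅. -/

import Mathlib

open MeasureTheory
open scoped Classical

/-- The duality pairing `⟨ψ, μ⟩ = ∫ ψ dμ` between continuous functions and signed
measures, via the Jordan decomposition. -/
noncomputable def pairing {X : Type*} [MeasurableSpace X] [TopologicalSpace X]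
    (ψ : C(X, ℝ)) (μ : SignedMeasure X) : ℝ :=
  ∫ x, ψ x ∂μ.toJordanDecomposition.posPart - ∫ x, ψ x ∂μ.toJordanDecomposition.negPart

/-- `F(μ) = |μ|(Ω) + ι_{M⁺(Ω)}(μ)`. -/
noncomputable def Ffun {X : Type*} [MeasurableSpace X] (μ : SignedMeasure X) : EReal :=
  if 0 ≤ μ then ((μ.totalVariation Set.univ).toReal : EReal) else ⊤

/-- Subdifferential of `F` at `μ`: `ψ ∈ ∂F(μ)` iff
`F(μ̄) ≥ F(μ) + ⟨ψ, μ̄ - μ⟩` for all signed measures `μ̄`. -/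
def InSubdiffF {X : Type*} [MeasurableSpace X] [TopologicalSpace X]
    (ψ : C(X, ℝ)) (μ : SignedMeasure X) : Prop :=
  ∀ ν : SignedMeasure X, Ffun μ + ((pairing ψ (ν - μ) : ℝ) : EReal) ≤ Ffun ν

/-- Topological support of a (nonnegative) measure: points all of whose neighbourhoods
have positive measure. -/
def msupport {X : Type*} [MeasurableSpace X] [TopologicalSpace X] (μ : Measure X) :
    Set X := {x | ∀ U ∈ nhds x, μ U ≠ 0}

section Aux

variable {X : Type*} [MeasurableSpace X]

/-- Jordan decomposition of the signed measure associated to a finite measure. -/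
lemma jd_toSignedMeasure (ρ : Measure X) [IsFiniteMeasure ρ] :
    ρ.toSignedMeasure.toJordanDecomposition
      = ⟨ρ, 0, Measure.MutuallySingular.zero_right⟩ := by
  apply MeasureTheory.SignedMeasure.toJordanDecomposition_eq
  rw [MeasureTheory.JordanDecomposition.toSignedMeasure]
  simp [Measure.toSignedMeasure_zero]

lemma toSignedMeasure_nonneg (ρ : Measure X) [IsFiniteMeasure ρ] :
    0 ≤ ρ.toSignedMeasure := by
  intro i hi
  rw [Measure.toSignedMeasure_apply_measurable hi]
  simpa using ENNReal.toReal_nonneg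

/-- A nonnegative signed measure comes from a finite measure. -/
lemma exists_measure_of_nonneg {μ : SignedMeasure X} (h : 0 ≤ μ) :
    ∃ (m : Measure X) (_ : IsFiniteMeasure m), m.toSignedMeasure = μ := by
  have h' : 0 ≤[Set.univ] μ := by
    rwa [MeasureTheory.VectorMeasure.le_restrict_univ_iff_le]
  exact ⟨μ.toMeasureOfZeroLE Set.univ MeasurableSet.univ h', inferInstance,
    MeasureTheory.SignedMeasure.toMeasureOfZeroLE_toSignedMeasure _ h'⟩

variable [TopologicalSpace X] [OpensMeasurableSpace X] [CompactSpace X] [T2Space X]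

lemma cont_integrable (ψ : C(X, ℝ)) (m : Measure X) [IsFiniteMeasure m] :
    Integrable (fun x => ψ x) m :=
  (map_continuous ψ).integrable_of_hasCompactSupport (HasCompactSupport.of_compactSpace _)

lemma pairing_toSigned (ψ : C(X, ℝ)) (ρ : Measure X) [IsFiniteMeasure ρ] :
    pairing ψ ρ.toSignedMeasure = ∫ x, ψ x ∂ρ := by
  rw [pairing, jd_toSignedMeasure]
  simp

lemma pairing_sub (ψ : C(X, ℝ)) (a b : Measure X) [IsFiniteMeasure a] [IsFiniteMeasure b] :
    pairing ψ (a.toSignedMeasure - b.toSignedMeasure)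
      = ∫ x, ψ x ∂a - ∫ x, ψ x ∂b := by
  set σ := a.toSignedMeasure - b.toSignedMeasure with hσdef
  set P := σ.toJordanDecomposition.posPart with hP
  set N := σ.toJordanDecomposition.negPart with hN
  have hσ : P.toSignedMeasure - N.toSignedMeasure = σ :=
    MeasureTheory.SignedMeasure.toSignedMeasure_toJordanDecomposition σ
  have hkey : P + b = a + N := by
    rw [← Measure.toSignedMeasure_eq_toSignedMeasure_iff,
      Measure.toSignedMeasure_add, Measure.toSignedMeasure_add]
    have : P.toSignedMeasure - N.toSignedMeasure
        = a.toSignedMeasure - b.toSignedMeasure := hσ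
    linear_combination (norm := abel) this
  have h1 : ∫ x, ψ x ∂P + ∫ x, ψ x ∂b = ∫ x, ψ x ∂a + ∫ x, ψ x ∂N := by
    rw [← integral_add_measure (cont_integrable ψ P) (cont_integrable ψ b),
      ← integral_add_measure (cont_integrable ψ a) (cont_integrable ψ N), hkey]
  rw [pairing, ← hP, ← hN]
  linarith

end Aux

/-- For `F(μ) = |μ|(Ω) + ι_{M⁺(Ω)}(μ)` and `μ ≥ 0`: `ψ ∈ ∂F(μ)` iff `ψ ≤ 1` on `Ω`
and `ψ = 1` on the support of `μ`. For `μ` not nonnegative, `∂F(μ) = ∅`. -/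
theorem stmt9 (d : ℕ) (Ω : Set (EuclideanSpace ℝ (Fin d))) (hΩ : IsCompact Ω)
    (hΩint : (interior Ω).Nonempty) (μ : SignedMeasure Ω) :
    (0 ≤ μ → ∀ ψ : C(Ω, ℝ),
        (InSubdiffF ψ μ ↔
          (∀ x : Ω, ψ x ≤ 1) ∧ ∀ x ∈ msupport μ.totalVariation, ψ x = 1)) ∧
      (¬ 0 ≤ μ → ∀ ψ : C(Ω, ℝ), ¬ InSubdiffF ψ μ) := by
  haveI : CompactSpace Ω := isCompact_iff_compactSpace.mp hΩ
  constructor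
  · intro hμ ψ
    obtain ⟨m, hmfin, hm⟩ := exists_measure_of_nonneg hμ
    haveI := hmfin
    have jdμ : μ.toJordanDecomposition = ⟨m, 0, Measure.MutuallySingular.zero_right⟩ := by
      rw [← hm]; exact jd_toSignedMeasure m
    have htv : μ.totalVariation = m := by
      rw [MeasureTheory.SignedMeasure.totalVariation, jdμ]; exact add_zero m
    have hFμ : Ffun μ = (((m Set.univ).toReal : ℝ) : EReal) := by
      rw [Ffun, if_pos hμ, htv]
    have hFρ : ∀ (ρ : Measure Ω) [IsFiniteMeasure ρ],
        Ffun ρ.toSignedMeasure = (((ρ Set.univ).toReal : ℝ) : EReal) := by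
      intro ρ hfin
      rw [Ffun, if_pos (toSignedMeasure_nonneg ρ),
        MeasureTheory.SignedMeasure.totalVariation, jd_toSignedMeasure]
      simp
    constructor
    · intro h
      have claim : ∀ (ρ : Measure Ω) [IsFiniteMeasure ρ],
          ∫ x, ψ x ∂ρ - (ρ Set.univ).toReal ≤ ∫ x, ψ x ∂m - (m Set.univ).toReal := by
        intro ρ hfin
        have h0 := h ρ.toSignedMeasure
        rw [hFμ, hFρ ρ, ← hm, pairing_sub, ← EReal.coe_add, EReal.coe_le_coe_iff] at h0
        linarith
      have hle1 : ∀ x : Ω, ψ x ≤ 1 := by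
        intro x
        have h0 := claim (m + Measure.dirac x)
        rw [integral_add_measure (cont_integrable ψ m) (cont_integrable ψ _),
          integral_dirac, Measure.add_apply,
          ENNReal.toReal_add (measure_ne_top m _) (measure_ne_top _ _)] at h0
        simp only [Measure.dirac_apply_of_mem (Set.mem_univ x), ENNReal.toReal_one] at h0
        linarith
      refine ⟨hle1, ?_⟩
      have hE : ∫ x, ψ x ∂m = (m Set.univ).toReal := by
        have h0 := claim (0 : Measure Ω)
        have h2 := claim (m + m)
        rw [integral_add_measure (cont_integrable ψ m) (cont_integrable ψ m),
          Measure.add_apply, ENNReal.toReal_add (measure_ne_top m _) (measure_ne_top m _)] at h2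
        simp only [integral_zero_measure, Measure.coe_zero, Pi.zero_apply,
          ENNReal.toReal_zero, sub_zero] at h0
        linarith
      intro x hx
      rw [htv] at hx
      by_contra hne
      have hlt : ψ x < 1 := lt_of_le_of_ne (hle1 x) hne
      have hg0 : ∫ y, (1 - ψ y) ∂m = 0 := by
        rw [integral_sub (integrable_const 1) (cont_integrable ψ m), integral_const]
        simp [hE, Measure.real]
      have hint : Integrable (fun y => 1 - ψ y) m := by
        exact (integrable_const (1:ℝ)).sub (cont_integrable ψ m)
      have hae : (fun y => 1 - ψ y) =ᵐ[m] 0 :=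
        (integral_eq_zero_iff_of_nonneg (fun y => by simpa using hle1 y) hint).mp hg0
      have hnull : m {y | ψ y < 1} = 0 := by
        have h1 : m {y | ¬((1:ℝ) - ψ y = 0)} = 0 := by
          have := hae
          rw [Filter.EventuallyEq, ae_iff] at this
          simpa using this
        refine measure_mono_null ?_ h1
        intro y hy
        simp only [Set.mem_setOf_eq] at hy ⊢
        intro hc
        linarith
      have hU : {y : Ω | ψ y < 1} ∈ nhds x :=
        (isOpen_lt (map_continuous ψ) continuous_const).mem_nhds hlt
      exact hx _ hU hnull
    · rintro ⟨hψ1, hψ2⟩ ν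
      by_cases hν : 0 ≤ ν
      · obtain ⟨ρ, hρfin, hρ⟩ := exists_measure_of_nonneg hν
        haveI := hρfin
        rw [hFμ, ← hρ, hFρ ρ, ← hm, pairing_sub, ← EReal.coe_add, EReal.coe_le_coe_iff]
        have hρle : ∫ x, ψ x ∂ρ ≤ (ρ Set.univ).toReal := by
          have : ∫ x, ψ x ∂ρ ≤ ∫ _, (1:ℝ) ∂ρ :=
            integral_mono (cont_integrable ψ ρ) (integrable_const 1) hψ1
          simpa [Measure.real] using this
        have hmeq : ∫ x, ψ x ∂m = (m Set.univ).toReal := by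
          have hnull : m {y : Ω | ψ y < 1} = 0 := by
            apply measure_null_of_locally_null
            intro y hy
            have hy' : y ∉ msupport μ.totalVariation := by
              intro hc
              have := hψ2 y hc
              simp only [Set.mem_setOf_eq] at hy
              linarith
            rw [htv] at hy'
            simp only [msupport, Set.mem_setOf_eq, not_forall] at hy'
            obtain ⟨U, hU, hU0⟩ := hy'
            rw [not_ne_iff] at hU0
            exact ⟨U ∩ {y : Ω | ψ y < 1},
              Filter.inter_mem (mem_nhdsWithin_of_mem_nhds hU) self_mem_nhdsWithin,
              measure_mono_null Set.inter_subset_left hU0⟩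
          have hae : (fun y => ψ y) =ᵐ[m] fun _ => (1:ℝ) := by
            rw [Filter.EventuallyEq, ae_iff]
            refine measure_mono_null ?_ hnull
            intro y hy
            simp only [Set.mem_setOf_eq] at hy ⊢
            exact lt_of_le_of_ne (hψ1 y) hy
          rw [integral_congr_ae hae]
          simp [Measure.real]
        linarith
      · have hFν : Ffun ν = ⊤ := by rw [Ffun, if_neg hν]
        rw [hFν]; exact le_top
  · intro hμ ψ hsub
    have h0 := hsub 0
    rw [Ffun, if_neg hμ, EReal.top_add_coe] at h0
    rw [Ffun, if_pos le_rfl] at h0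
    simp [MeasureTheory.SignedMeasure.totalVariation_zero] at h0
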